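/- arXiv:1408.0760 — 3 statements merged into one kernel-verified Lean document; each statement's English description precedes it below -/
import Mathlib

section
/- Let S be a nonsingular projective surface and G a finite subgroup of Aut(S). For a subgroup H ≤ G write z(H) = Σ_{h∈H} h in the complex group algebra ℂG. Let H, H₁, …, H_r be subgroups of G and let 𝓘 be the two-sided ideal of ℂG generated by z(H₁), …, z(H_r). If z(H) ∈ 𝓘 and the Albanese kernel T(S/H_i) = 0 for every i, then T(S/H) = 0. -/
/-- `z(H) = Σ_{h∈H} h` in the complex group algebra `ℂG`. -/
noncomputable def zOf (G : Type*) [Group G] [Fintype G] (H : Subgroup G) :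
    MonoidAlgebra ℂ G :=
  ∑ h ∈ (H : Set G).toFinite.toFinset, MonoidAlgebra.single h (1 : ℂ)

/-- `T(S/H) = 0`: as in the context, `T(S/H)` is identified with the `H`-invariant
part of the `ℂG`-module `A` (the complexified Albanese kernel `T(S)` of `S`, on which
the group algebra `ℂG` of `G ≤ Aut(S)` acts), so its vanishing says that every
`H`-invariant element of `A` is zero. -/
def TQuotTrivial {G : Type*} [Group G] (A : Type*) [AddCommGroup A]
    [Module (MonoidAlgebra ℂ G) A] (H : Subgroup G) : Prop :=
  ∀ a : A, (∀ h ∈ H, (MonoidAlgebra.single h (1 : ℂ)) • a = a) → a = 0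

lemma single_mul_zOf {G : Type*} [Group G] [Fintype G] (H : Subgroup G) {h : G}
    (hh : h ∈ H) : MonoidAlgebra.single h (1 : ℂ) * zOf G H = zOf G H := by
  unfold zOf
  rw [Finset.mul_sum]
  refine Finset.sum_nbij' (fun x => h * x) (fun x => h⁻¹ * x) ?_ ?_ ?_ ?_ ?_
  · intro a ha
    simp only [Set.Finite.mem_toFinset, SetLike.mem_coe] at ha ⊢
    exact H.mul_mem hh ha
  · intro a ha
    simp only [Set.Finite.mem_toFinset, SetLike.mem_coe] at ha ⊢
    exact H.mul_mem (H.inv_mem hh) ha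
  · intro a _; group
  · intro a _; group
  · intro a _
    simp [MonoidAlgebra.single_mul_single]

lemma zOf_smul_invariant {G : Type*} [Group G] [Fintype G]
    {A : Type*} [AddCommGroup A] [Module (MonoidAlgebra ℂ G) A]
    (H : Subgroup G) (b : A) {h : G} (hh : h ∈ H) :
    MonoidAlgebra.single h (1 : ℂ) • (zOf G H • b) = zOf G H • b := by
  rw [← mul_smul, single_mul_zOf H hh]

/-- Barlow's lemma: if `z(H)` lies in the two-sided ideal of `ℂG` generated by
`z(H₁), …, z(H_r)` and `T(S/Hᵢ) = 0` for all `i`, then `T(S/H) = 0`. -/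
theorem stmt0 (G : Type*) [Group G] [Fintype G]
    (A : Type*) [AddCommGroup A] [Module (MonoidAlgebra ℂ G) A]
    (r : ℕ) (Hs : Fin r → Subgroup G) (H : Subgroup G)
    (hmem : zOf G H ∈ TwoSidedIdeal.span (Set.range fun i => zOf G (Hs i)))
    (hT : ∀ i, TQuotTrivial A (Hs i)) :
    TQuotTrivial A H := by
  intro a ha
  -- the annihilator of `A` is a two-sided ideal
  let I : TwoSidedIdeal (MonoidAlgebra ℂ G) := TwoSidedIdeal.mk'
    {x | ∀ b : A, x • b = 0}
    (fun b => zero_smul _ b)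
    (fun hx hy b => by rw [add_smul, hx b, hy b, add_zero])
    (fun hx b => by rw [neg_smul, hx b, neg_zero])
    (fun {x y} hy b => by rw [mul_smul, hy b, smul_zero])
    (fun {x y} hx b => by rw [mul_smul, hx (y • b)])
  have hgen : (Set.range fun i => zOf G (Hs i)) ⊆ I := by
    rintro _ ⟨i, rfl⟩
    show _ ∈ I
    rw [TwoSidedIdeal.mem_mk']
    intro b
    exact hT i _ (fun h hh => zOf_smul_invariant (Hs i) b hh)
  have hzero : zOf G H • a = 0 := by
    have := TwoSidedIdeal.mem_span_iff.mp hmem I hgen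
    rw [TwoSidedIdeal.mem_mk'] at this
    exact this a
  -- but `zOf G H • a = |H| • a`
  set m : ℕ := ((H : Set G).toFinite.toFinset).card with hm
  have hsum : zOf G H • a = (m : MonoidAlgebra ℂ G) • a := by
    unfold zOf
    rw [Finset.sum_smul, Finset.sum_congr rfl (fun h hh => ha h (by simpa using hh)),
      Finset.sum_const, Nat.cast_smul_eq_nsmul]
  have hm0 : (m : ℂ) ≠ 0 := by
    have h1 : (1 : G) ∈ (H : Set G).toFinite.toFinset := by
      simp only [Set.Finite.mem_toFinset, SetLike.mem_coe]; exact H.one_mem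
    exact Nat.cast_ne_zero.mpr (Finset.card_ne_zero_of_mem h1)
  have key : (m : MonoidAlgebra ℂ G) • a = 0 := hsum.symm.trans hzero
  calc a = ((1 : MonoidAlgebra ℂ G)) • a := (one_smul _ a).symm
    _ = (((m : ℂ)⁻¹ • 1 : MonoidAlgebra ℂ G) * (m : MonoidAlgebra ℂ G)) • a := by
        congr 1
        rw [smul_mul_assoc, one_mul, ← map_natCast (algebraMap ℂ (MonoidAlgebra ℂ G)) m,
          Algebra.algebraMap_eq_smul_one, smul_smul, inv_mul_cancel₀ hm0, one_smul]
    _ = ((m : ℂ)⁻¹ • 1 : MonoidAlgebra ℂ G) • ((m : MonoidAlgebra ℂ G) • a) := mul_smul _ _ _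
    _ = 0 := by rw [key, smul_zero]
end

section
/- Let S be a minimal surface of general type with K_S² = 6 and p_g(S) = q(S) = 0, and let σ be an involution on S whose fixed locus consists of k isolated points and a smooth curve R. Let P be the minimal model of the resolution W of S/⟨σ⟩, assume W is of general type, and let B̄ ≡ 2Δ be the induced even branch divisor on P with singular points of multiplicities m_i, x_i = ⌊m_i/2⌋. Then 5 − k/2 = K_P² + K_P·Δ + Σ_i (x_i − 1). -/
open Finset

/-- For a minimal surface `S` of general type with `K_S² = 6`, `p_g = q = 0`, an
involution `σ` with `k` isolated fixed points, and `P` the minimal model of the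
resolution `W` of `S/⟨σ⟩` (assumed of general type) with even branch divisor
`B̄ ≡ 2Δ`: combining Horikawa's double-cover formulas one gets
`5 − k/2 = K_P² + K_P·Δ + Σᵢ (xᵢ − 1)` where `xᵢ = ⌊mᵢ/2⌋`. -/
theorem stmt3
    -- abstract geometric hypotheses
    (SIsMinimalOfGeneralTypeWithInvolutionSigma : Prop)
    (hS : SIsMinimalOfGeneralTypeWithInvolutionSigma)
    (WIsOfGeneralType : Prop) (hW : WIsOfGeneralType)
    (k : ℕ)                                  -- isolated fixed points of σ
    (KS2 chiOS : ℚ) (hKS2 : KS2 = 6) (hchiOS : chiOS = 1)   -- K_S² = 6, p_g = q = 0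
    (KP2 KPD D2 chiOP : ℚ)                   -- K_P², K_P·Δ, Δ², χ(𝒪_P)
    (hchiOP : chiOP = 1)                     -- p_g(P) = q(P) = 0
    (ι : Type*) [Fintype ι]                  -- singular points of B̄
    (m : ι → ℕ)                              -- their multiplicities
    (x : ι → ℚ) (hx : ∀ i, x i = ((m i / 2 : ℕ) : ℚ))  -- xᵢ = ⌊mᵢ/2⌋
    -- Horikawa's formulas for the canonical resolution of the double cover:
    (h1 : KS2 - k = 2 * (KP2 + 2 * KPD + D2) - 2 * ∑ i, (x i - 1) ^ 2)
    (h2 : chiOS = 2 * chiOP + (1 / 2) * (KPD + D2) - (1 / 2) * ∑ i, x i * (x i - 1)) :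
    5 - (k : ℚ) / 2 = KP2 + KPD + ∑ i, (x i - 1) := by
  subst hKS2 hchiOS hchiOP
  have key : ∑ i, x i * (x i - 1) - ∑ i, (x i - 1) ^ 2 = ∑ i, (x i - 1) := by
    rw [← Finset.sum_sub_distrib]
    exact Finset.sum_congr rfl fun i _ => by ring
  linear_combination (1/2) * h1 - 2 * h2 + key
end

section
/- Let X_b = {𝓛₁(z₁)𝓛₂(z₂)𝓛₃(z₃) = b₁b₂b₃} ⊂ E₁×E₂×E₃ and let g₇ be the involution (z₁,z₂,z₃) ↦ (z₁, −z₂ + 1/2, −z₃ + 1/2). Then Fix(g₇) ∩ X_b is the disjoint union of 8 elliptic curves (the fibers {z₁ ∈ E₁} over the 8 pairs (z₂,z₃) with {z₂,z₃} mapping to ({zeros of 𝓛₂} × {poles of 𝓛₃}) ∪ ({poles of 𝓛₂} × {zeros of 𝓛₃})) together with exactly 16 isolated points. -/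
lemma ncard_sprod {α β : Type*} (s : Set α) (t : Set β) :
    (s ×ˢ t).ncard = s.ncard * t.ncard := by
  rw [← Nat.card_coe_set_eq, ← Nat.card_coe_set_eq, ← Nat.card_coe_set_eq,
    Nat.card_congr (Equiv.Set.prod s t), Nat.card_prod]

lemma ncard_le_three {α : Type*} (x y z : α) : ({x, y, z} : Set α).ncard ≤ 3 := by
  have h1 := Set.ncard_insert_le x ({y, z} : Set α)
  have h2 := Set.ncard_insert_le y ({z} : Set α)
  simp only [Set.ncard_singleton] at h2
  omega

lemma four_distinct {α : Type*} {a b c d : α} (h : ({a, b, c, d} : Set α).ncard = 4) :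
    a ≠ b ∧ a ≠ c ∧ a ≠ d ∧ b ≠ c ∧ b ≠ d ∧ c ≠ d := by
  refine ⟨?_, ?_, ?_, ?_, ?_, ?_⟩ <;> rintro rfl
  · rw [show ({a, a, c, d} : Set α) = {a, c, d} from by ext w; simp only [Set.mem_insert_iff, Set.mem_singleton_iff]; tauto] at h
    have := ncard_le_three a c d; omega
  · rw [show ({a, b, a, d} : Set α) = {a, b, d} from by ext w; simp only [Set.mem_insert_iff, Set.mem_singleton_iff]; tauto] at h
    have := ncard_le_three a b d; omega
  · rw [show ({a, b, c, a} : Set α) = {a, b, c} from by ext w; simp only [Set.mem_insert_iff, Set.mem_singleton_iff]; tauto] at h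
    have := ncard_le_three a b c; omega
  · rw [show ({a, b, b, d} : Set α) = {a, b, d} from by ext w; simp only [Set.mem_insert_iff, Set.mem_singleton_iff]; tauto] at h
    have := ncard_le_three a b d; omega
  · rw [show ({a, b, c, b} : Set α) = {a, b, c} from by ext w; simp only [Set.mem_insert_iff, Set.mem_singleton_iff]; tauto] at h
    have := ncard_le_three a b c; omega
  · rw [show ({a, b, c, c} : Set α) = {a, b, c} from by ext w; simp only [Set.mem_insert_iff, Set.mem_singleton_iff]; tauto] at h
    have := ncard_le_three a b c; omega

/-- The elliptic curve `E = ℂ/⟨1,τ⟩`. -/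
abbrev Ell (τ : ℂ) : Type := ℂ ⧸ AddSubgroup.closure ({1, τ} : Set ℂ)

/-- The class of `z ∈ ℂ` in `E = ℂ/⟨1,τ⟩`. -/
noncomputable def emk (τ : ℂ) (z : ℂ) : Ell τ := QuotientAddGroup.mk z

/-- Fixed locus on `X_b = {𝓛₁𝓛₂𝓛₃ = b₁b₂b₃}` of the involution
`g₇ : (z₁,z₂,z₃) ↦ (z₁, −z₂ + 1/2, −z₃ + 1/2)`: it is the disjoint union of the 8
elliptic curves `E₁ × {(z₂,z₃)}` over the 8 "good" pairs `(z₂,z₃)` in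
(zeros of `𝓛₂`) × (poles of `𝓛₃`) ∪ (poles of `𝓛₂`) × (zeros of `𝓛₃`), together with
exactly 16 isolated points. Each `𝓛ⱼ` is modelled in homogeneous coordinates by
`Lⱼ : Eⱼ → ℂ × ℂ` (never `(0,0)`); the equation of `X_b` reads
`𝓛₁₀𝓛₂₀𝓛₃₀ = b₁b₂b₃·𝓛₁₁𝓛₂₁𝓛₃₁`. -/
theorem stmt15 (τ₁ τ₂ τ₃ : ℂ) (b₁ b₂ b₃ : ℂ)
    (hb₁ : b₁ ≠ 0) (hb₂ : b₂ ≠ 0) (hb₃ : b₃ ≠ 0)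
    (L₁ : Ell τ₁ → ℂ × ℂ) (L₂ : Ell τ₂ → ℂ × ℂ) (L₃ : Ell τ₃ → ℂ × ℂ)
    (hL₁ : ∀ z, L₁ z ≠ (0, 0)) (hL₂ : ∀ z, L₂ z ≠ (0, 0)) (hL₃ : ∀ z, L₃ z ≠ (0, 0))
    -- zeros of 𝓛₂, 𝓛₃ at ±1/4, poles at τ/2 ± 1/4:
    (hz₂ : ∀ z : Ell τ₂, (L₂ z).1 = 0 ↔ (z = emk τ₂ (1 / 4) ∨ z = emk τ₂ (-(1 / 4))))
    (hp₂ : ∀ z : Ell τ₂, (L₂ z).2 = 0 ↔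
      (z = emk τ₂ (τ₂ / 2 + 1 / 4) ∨ z = emk τ₂ (τ₂ / 2 - 1 / 4)))
    (hz₃ : ∀ z : Ell τ₃, (L₃ z).1 = 0 ↔ (z = emk τ₃ (1 / 4) ∨ z = emk τ₃ (-(1 / 4))))
    (hp₃ : ∀ z : Ell τ₃, (L₃ z).2 = 0 ↔
      (z = emk τ₃ (τ₃ / 2 + 1 / 4) ∨ z = emk τ₃ (τ₃ / 2 - 1 / 4)))
    -- on E, the involution z ↦ −z + 1/2 fixes exactly the 4 points ±1/4, τ/2 ± 1/4:
    (hfix₂ : ∀ z : Ell τ₂, -z + emk τ₂ (1 / 2) = z ↔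
      z ∈ ({emk τ₂ (1 / 4), emk τ₂ (-(1 / 4)), emk τ₂ (τ₂ / 2 + 1 / 4),
        emk τ₂ (τ₂ / 2 - 1 / 4)} : Set (Ell τ₂)))
    (hfix₃ : ∀ z : Ell τ₃, -z + emk τ₃ (1 / 2) = z ↔
      z ∈ ({emk τ₃ (1 / 4), emk τ₃ (-(1 / 4)), emk τ₃ (τ₃ / 2 + 1 / 4),
        emk τ₃ (τ₃ / 2 - 1 / 4)} : Set (Ell τ₃)))
    (hcard₂ : ({emk τ₂ (1 / 4), emk τ₂ (-(1 / 4)), emk τ₂ (τ₂ / 2 + 1 / 4),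
        emk τ₂ (τ₂ / 2 - 1 / 4)} : Set (Ell τ₂)).ncard = 4)
    (hcard₃ : ({emk τ₃ (1 / 4), emk τ₃ (-(1 / 4)), emk τ₃ (τ₃ / 2 + 1 / 4),
        emk τ₃ (τ₃ / 2 - 1 / 4)} : Set (Ell τ₃)).ncard = 4)
    -- 𝓛₁ has exactly 2 zeros and 2 poles on E₁:
    (hsol₁ : {z : Ell τ₁ | (L₁ z).1 = 0}.ncard = 2 ∧ {z : Ell τ₁ | (L₁ z).2 = 0}.ncard = 2) :
    -- the 8 "good" pairs sweep out 8 elliptic curves E₁ × {(z₂,z₃)} contained in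
    -- Fix(g₇) ∩ X_b:
    ((({emk τ₂ (1 / 4), emk τ₂ (-(1 / 4))} : Set (Ell τ₂)) ×ˢ
        ({emk τ₃ (τ₃ / 2 + 1 / 4), emk τ₃ (τ₃ / 2 - 1 / 4)} : Set (Ell τ₃)) ∪
      ({emk τ₂ (τ₂ / 2 + 1 / 4), emk τ₂ (τ₂ / 2 - 1 / 4)} : Set (Ell τ₂)) ×ˢ
        ({emk τ₃ (1 / 4), emk τ₃ (-(1 / 4))} : Set (Ell τ₃))).ncard = 8 ∧
    (∀ p : Ell τ₁ × Ell τ₂ × Ell τ₃,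
      (p.2.1, p.2.2) ∈
          (({emk τ₂ (1 / 4), emk τ₂ (-(1 / 4))} : Set (Ell τ₂)) ×ˢ
            ({emk τ₃ (τ₃ / 2 + 1 / 4), emk τ₃ (τ₃ / 2 - 1 / 4)} : Set (Ell τ₃)) ∪
          ({emk τ₂ (τ₂ / 2 + 1 / 4), emk τ₂ (τ₂ / 2 - 1 / 4)} : Set (Ell τ₂)) ×ˢ
            ({emk τ₃ (1 / 4), emk τ₃ (-(1 / 4))} : Set (Ell τ₃))) →
        ((p.1, -p.2.1 + emk τ₂ (1 / 2), -p.2.2 + emk τ₃ (1 / 2)) = p ∧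
          (L₁ p.1).1 * (L₂ p.2.1).1 * (L₃ p.2.2).1
            = b₁ * b₂ * b₃ * ((L₁ p.1).2 * (L₂ p.2.1).2 * (L₃ p.2.2).2))) ∧
    -- the rest of Fix(g₇) ∩ X_b consists of exactly 16 isolated points:
    {p : Ell τ₁ × Ell τ₂ × Ell τ₃ |
        (p.1, -p.2.1 + emk τ₂ (1 / 2), -p.2.2 + emk τ₃ (1 / 2)) = p ∧
        (L₁ p.1).1 * (L₂ p.2.1).1 * (L₃ p.2.2).1
          = b₁ * b₂ * b₃ * ((L₁ p.1).2 * (L₂ p.2.1).2 * (L₃ p.2.2).2) ∧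
        (p.2.1, p.2.2) ∉
          (({emk τ₂ (1 / 4), emk τ₂ (-(1 / 4))} : Set (Ell τ₂)) ×ˢ
            ({emk τ₃ (τ₃ / 2 + 1 / 4), emk τ₃ (τ₃ / 2 - 1 / 4)} : Set (Ell τ₃)) ∪
          ({emk τ₂ (τ₂ / 2 + 1 / 4), emk τ₂ (τ₂ / 2 - 1 / 4)} : Set (Ell τ₂)) ×ˢ
            ({emk τ₃ (1 / 4), emk τ₃ (-(1 / 4))} : Set (Ell τ₃)))}.ncard = 16) := by

  obtain ⟨h2ab, h2ac, h2ad, h2bc, h2bd, h2cd⟩ := four_distinct hcard₂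
  obtain ⟨h3ab, h3ac, h3ad, h3bc, h3bd, h3cd⟩ := four_distinct hcard₃
  have hz2ne : ∀ z : Ell τ₂, (z = emk τ₂ (1 / 4) ∨ z = emk τ₂ (-(1 / 4))) → (L₂ z).2 ≠ 0 := by
    rintro z hz h0
    rcases (hp₂ z).mp h0 with rfl | rfl <;> rcases hz with h | h <;>
      first | exact h2ac h.symm | exact h2ad h.symm | exact h2bc h.symm | exact h2bd h.symm
  have hp2ne : ∀ z : Ell τ₂,
      (z = emk τ₂ (τ₂ / 2 + 1 / 4) ∨ z = emk τ₂ (τ₂ / 2 - 1 / 4)) → (L₂ z).1 ≠ 0 := by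
    rintro z hz h0
    rcases (hz₂ z).mp h0 with rfl | rfl <;> rcases hz with h | h <;>
      first | exact h2ac h | exact h2ad h | exact h2bc h | exact h2bd h
  have hz3ne : ∀ z : Ell τ₃, (z = emk τ₃ (1 / 4) ∨ z = emk τ₃ (-(1 / 4))) → (L₃ z).2 ≠ 0 := by
    rintro z hz h0
    rcases (hp₃ z).mp h0 with rfl | rfl <;> rcases hz with h | h <;>
      first | exact h3ac h.symm | exact h3ad h.symm | exact h3bc h.symm | exact h3bd h.symm
  have hp3ne : ∀ z : Ell τ₃,
      (z = emk τ₃ (τ₃ / 2 + 1 / 4) ∨ z = emk τ₃ (τ₃ / 2 - 1 / 4)) → (L₃ z).1 ≠ 0 := by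
    rintro z hz h0
    rcases (hz₃ z).mp h0 with rfl | rfl <;> rcases hz with h | h <;>
      first | exact h3ac h | exact h3ad h | exact h3bc h | exact h3bd h
  refine ⟨?_, ?_, ?_⟩
  · -- the 8 good pairs
    have hdisj : Disjoint
        (({emk τ₂ (1 / 4), emk τ₂ (-(1 / 4))} : Set (Ell τ₂)) ×ˢ
          ({emk τ₃ (τ₃ / 2 + 1 / 4), emk τ₃ (τ₃ / 2 - 1 / 4)} : Set (Ell τ₃)))
        (({emk τ₂ (τ₂ / 2 + 1 / 4), emk τ₂ (τ₂ / 2 - 1 / 4)} : Set (Ell τ₂)) ×ˢ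
          ({emk τ₃ (1 / 4), emk τ₃ (-(1 / 4))} : Set (Ell τ₃))) := by
      rw [Set.disjoint_left]
      rintro ⟨x, y⟩ h h'
      simp only [Set.mem_prod, Set.mem_insert_iff, Set.mem_singleton_iff] at h h'
      obtain ⟨hx, -⟩ := h
      obtain ⟨hx', -⟩ := h'
      rcases hx with rfl | rfl <;> rcases hx' with h | h <;>
        first | exact h2ac h | exact h2ad h | exact h2bc h | exact h2bd h
    rw [Set.ncard_union_eq hdisj
      (((Set.finite_singleton _).insert _).prod
        ((Set.finite_singleton _).insert _))
      (((Set.finite_singleton _).insert _).prod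
        ((Set.finite_singleton _).insert _)),
      ncard_sprod, ncard_sprod, Set.ncard_pair h2ab, Set.ncard_pair h3cd,
      Set.ncard_pair h2cd, Set.ncard_pair h3ab]
  · -- the 8 curves lie in Fix(g₇) ∩ X_b
    rintro ⟨z₁, z₂, z₃⟩ hmem
    simp only [Set.mem_union, Set.mem_prod, Set.mem_insert_iff, Set.mem_singleton_iff] at hmem
    have m2 : z₂ = emk τ₂ (1 / 4) ∨ z₂ = emk τ₂ (-(1 / 4)) ∨ z₂ = emk τ₂ (τ₂ / 2 + 1 / 4) ∨
        z₂ = emk τ₂ (τ₂ / 2 - 1 / 4) := by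
      rcases hmem with ⟨h | h, -⟩ | ⟨h | h, -⟩
      exacts [Or.inl h, Or.inr (Or.inl h), Or.inr (Or.inr (Or.inl h)),
        Or.inr (Or.inr (Or.inr h))]
    have m3 : z₃ = emk τ₃ (1 / 4) ∨ z₃ = emk τ₃ (-(1 / 4)) ∨ z₃ = emk τ₃ (τ₃ / 2 + 1 / 4) ∨
        z₃ = emk τ₃ (τ₃ / 2 - 1 / 4) := by
      rcases hmem with ⟨-, h | h⟩ | ⟨-, h | h⟩
      exacts [Or.inr (Or.inr (Or.inl h)), Or.inr (Or.inr (Or.inr h)), Or.inl h,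
        Or.inr (Or.inl h)]
    constructor
    · have f2 : -z₂ + emk τ₂ (1 / 2) = z₂ := (hfix₂ z₂).mpr
        (by simp only [Set.mem_insert_iff, Set.mem_singleton_iff]; exact m2)
      have f3 : -z₃ + emk τ₃ (1 / 2) = z₃ := (hfix₃ z₃).mpr
        (by simp only [Set.mem_insert_iff, Set.mem_singleton_iff]; exact m3)
      simp only [Prod.mk.injEq]
      refine ⟨?_, f2, f3⟩
      trivial
    · rcases hmem with ⟨h2, h3⟩ | ⟨h2, h3⟩
      · have e2 : (L₂ z₂).1 = 0 := (hz₂ z₂).mpr h2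
        have e3 : (L₃ z₃).2 = 0 := (hp₃ z₃).mpr h3
        show (L₁ z₁).1 * (L₂ z₂).1 * (L₃ z₃).1
            = b₁ * b₂ * b₃ * ((L₁ z₁).2 * (L₂ z₂).2 * (L₃ z₃).2)
        rw [e2, e3]; ring
      · have e2 : (L₂ z₂).2 = 0 := (hp₂ z₂).mpr h2
        have e3 : (L₃ z₃).1 = 0 := (hz₃ z₃).mpr h3
        show (L₁ z₁).1 * (L₂ z₂).1 * (L₃ z₃).1
            = b₁ * b₂ * b₃ * ((L₁ z₁).2 * (L₂ z₂).2 * (L₃ z₃).2)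
        rw [e2, e3]; ring
  · -- the 16 isolated points
    have hSeq : {p : Ell τ₁ × Ell τ₂ × Ell τ₃ |
        (p.1, -p.2.1 + emk τ₂ (1 / 2), -p.2.2 + emk τ₃ (1 / 2)) = p ∧
        (L₁ p.1).1 * (L₂ p.2.1).1 * (L₃ p.2.2).1
          = b₁ * b₂ * b₃ * ((L₁ p.1).2 * (L₂ p.2.1).2 * (L₃ p.2.2).2) ∧
        (p.2.1, p.2.2) ∉
          (({emk τ₂ (1 / 4), emk τ₂ (-(1 / 4))} : Set (Ell τ₂)) ×ˢ
            ({emk τ₃ (τ₃ / 2 + 1 / 4), emk τ₃ (τ₃ / 2 - 1 / 4)} : Set (Ell τ₃)) ∪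
          ({emk τ₂ (τ₂ / 2 + 1 / 4), emk τ₂ (τ₂ / 2 - 1 / 4)} : Set (Ell τ₂)) ×ˢ
            ({emk τ₃ (1 / 4), emk τ₃ (-(1 / 4))} : Set (Ell τ₃)))} =
        ({z : Ell τ₁ | (L₁ z).2 = 0} ×ˢ
          (({emk τ₂ (1 / 4), emk τ₂ (-(1 / 4))} : Set (Ell τ₂)) ×ˢ
            ({emk τ₃ (1 / 4), emk τ₃ (-(1 / 4))} : Set (Ell τ₃)))) ∪
        ({z : Ell τ₁ | (L₁ z).1 = 0} ×ˢ
          (({emk τ₂ (τ₂ / 2 + 1 / 4), emk τ₂ (τ₂ / 2 - 1 / 4)} : Set (Ell τ₂)) ×ˢ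
            ({emk τ₃ (τ₃ / 2 + 1 / 4), emk τ₃ (τ₃ / 2 - 1 / 4)} : Set (Ell τ₃)))) := by
      ext ⟨z₁, z₂, z₃⟩
      simp only [Set.mem_setOf_eq, Set.mem_union, Set.mem_prod, Set.mem_insert_iff,
        Set.mem_singleton_iff, Prod.mk.injEq, true_and]
      constructor
      · rintro ⟨⟨f2, f3⟩, heq, hnot⟩
        have m2 := (hfix₂ z₂).mp f2
        have m3 := (hfix₃ z₃).mp f3
        simp only [Set.mem_insert_iff, Set.mem_singleton_iff] at m2 m3
        have hA2 : (z₂ = emk τ₂ (1 / 4) ∨ z₂ = emk τ₂ (-(1 / 4))) ∨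
            (z₂ = emk τ₂ (τ₂ / 2 + 1 / 4) ∨ z₂ = emk τ₂ (τ₂ / 2 - 1 / 4)) := by
          rcases m2 with h | h | h | h
          exacts [Or.inl (Or.inl h), Or.inl (Or.inr h), Or.inr (Or.inl h), Or.inr (Or.inr h)]
        have hA3 : (z₃ = emk τ₃ (1 / 4) ∨ z₃ = emk τ₃ (-(1 / 4))) ∨
            (z₃ = emk τ₃ (τ₃ / 2 + 1 / 4) ∨ z₃ = emk τ₃ (τ₃ / 2 - 1 / 4)) := by
          rcases m3 with h | h | h | h
          exacts [Or.inl (Or.inl h), Or.inl (Or.inr h), Or.inr (Or.inl h), Or.inr (Or.inr h)]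
        rcases hA2 with h2 | h2 <;> rcases hA3 with h3 | h3
        · left
          have e2 : (L₂ z₂).1 = 0 := (hz₂ z₂).mpr h2
          have n2 : (L₂ z₂).2 ≠ 0 := hz2ne z₂ h2
          have n3 : (L₃ z₃).2 ≠ 0 := hz3ne z₃ h3
          have h0 : b₁ * b₂ * b₃ * ((L₁ z₁).2 * (L₂ z₂).2 * (L₃ z₃).2) = 0 := by
            rw [← heq, e2]; ring
          simp only [mul_eq_zero] at h0
          have : (L₁ z₁).2 = 0 := by
            rcases h0 with ((h | h) | h) | ((h | h) | h)
            exacts [absurd h hb₁, absurd h hb₂, absurd h hb₃, h, absurd h n2, absurd h n3]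
          exact ⟨this, h2, h3⟩
        · exact absurd (Or.inl ⟨h2, h3⟩) hnot
        · exact absurd (Or.inr ⟨h2, h3⟩) hnot
        · right
          have e2 : (L₂ z₂).2 = 0 := (hp₂ z₂).mpr h2
          have n2 : (L₂ z₂).1 ≠ 0 := hp2ne z₂ h2
          have n3 : (L₃ z₃).1 ≠ 0 := hp3ne z₃ h3
          have h0 : (L₁ z₁).1 * (L₂ z₂).1 * (L₃ z₃).1 = 0 := by
            rw [heq, e2]; ring
          simp only [mul_eq_zero] at h0
          have : (L₁ z₁).1 = 0 := by
            rcases h0 with (h | h) | h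
            exacts [h, absurd h n2, absurd h n3]
          exact ⟨this, h2, h3⟩
      · rintro (⟨h1, h2, h3⟩ | ⟨h1, h2, h3⟩)
        · have f2 : -z₂ + emk τ₂ (1 / 2) = z₂ := (hfix₂ z₂).mpr
            (by simp only [Set.mem_insert_iff, Set.mem_singleton_iff]
                rcases h2 with h | h
                exacts [Or.inl h, Or.inr (Or.inl h)])
          have f3 : -z₃ + emk τ₃ (1 / 2) = z₃ := (hfix₃ z₃).mpr
            (by simp only [Set.mem_insert_iff, Set.mem_singleton_iff]
                rcases h3 with h | h
                exacts [Or.inl h, Or.inr (Or.inl h)])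
          refine ⟨⟨f2, f3⟩, ?_, ?_⟩
          · have e2 : (L₂ z₂).1 = 0 := (hz₂ z₂).mpr h2
            rw [e2, h1]; ring
          · rintro (⟨-, h3'⟩ | ⟨h2', -⟩)
            · rcases h3 with rfl | rfl <;> rcases h3' with h | h <;>
                first | exact h3ac h | exact h3ad h | exact h3bc h | exact h3bd h
            · rcases h2 with rfl | rfl <;> rcases h2' with h | h <;>
                first | exact h2ac h | exact h2ad h | exact h2bc h | exact h2bd h
        · have f2 : -z₂ + emk τ₂ (1 / 2) = z₂ := (hfix₂ z₂).mpr
            (by simp only [Set.mem_insert_iff, Set.mem_singleton_iff]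
                rcases h2 with h | h
                exacts [Or.inr (Or.inr (Or.inl h)), Or.inr (Or.inr (Or.inr h))])
          have f3 : -z₃ + emk τ₃ (1 / 2) = z₃ := (hfix₃ z₃).mpr
            (by simp only [Set.mem_insert_iff, Set.mem_singleton_iff]
                rcases h3 with h | h
                exacts [Or.inr (Or.inr (Or.inl h)), Or.inr (Or.inr (Or.inr h))])
          refine ⟨⟨f2, f3⟩, ?_, ?_⟩
          · have e2 : (L₂ z₂).2 = 0 := (hp₂ z₂).mpr h2
            rw [e2, h1]; ring
          · rintro (⟨h2', -⟩ | ⟨-, h3'⟩)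
            · rcases h2 with rfl | rfl <;> rcases h2' with h | h <;>
                first | exact h2ac h.symm | exact h2ad h.symm
                      | exact h2bc h.symm | exact h2bd h.symm
            · rcases h3 with rfl | rfl <;> rcases h3' with h | h <;>
                first | exact h3ac h.symm | exact h3ad h.symm
                      | exact h3bc h.symm | exact h3bd h.symm
    have hfin2 : {z : Ell τ₁ | (L₁ z).2 = 0}.Finite :=
      Set.finite_of_ncard_ne_zero (by rw [hsol₁.2]; norm_num)
    have hfin1 : {z : Ell τ₁ | (L₁ z).1 = 0}.Finite :=
      Set.finite_of_ncard_ne_zero (by rw [hsol₁.1]; norm_num)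
    have hdisj : Disjoint
        ({z : Ell τ₁ | (L₁ z).2 = 0} ×ˢ
          (({emk τ₂ (1 / 4), emk τ₂ (-(1 / 4))} : Set (Ell τ₂)) ×ˢ
            ({emk τ₃ (1 / 4), emk τ₃ (-(1 / 4))} : Set (Ell τ₃))))
        ({z : Ell τ₁ | (L₁ z).1 = 0} ×ˢ
          (({emk τ₂ (τ₂ / 2 + 1 / 4), emk τ₂ (τ₂ / 2 - 1 / 4)} : Set (Ell τ₂)) ×ˢ
            ({emk τ₃ (τ₃ / 2 + 1 / 4), emk τ₃ (τ₃ / 2 - 1 / 4)} : Set (Ell τ₃)))) := by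
      rw [Set.disjoint_left]
      rintro ⟨x, y, w⟩ h h'
      simp only [Set.mem_prod, Set.mem_insert_iff, Set.mem_singleton_iff,
        Set.mem_setOf_eq] at h h'
      obtain ⟨-, hy, -⟩ := h
      obtain ⟨-, hy', -⟩ := h'
      rcases hy with rfl | rfl <;> rcases hy' with h | h <;>
        first | exact h2ac h | exact h2ad h | exact h2bc h | exact h2bd h
    rw [hSeq, Set.ncard_union_eq hdisj
      (hfin2.prod (((Set.finite_singleton _).insert _).prod
        ((Set.finite_singleton _).insert _)))
      (hfin1.prod (((Set.finite_singleton _).insert _).prod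
        ((Set.finite_singleton _).insert _))),
      ncard_sprod, ncard_sprod, ncard_sprod, ncard_sprod, hsol₁.1, hsol₁.2,
      Set.ncard_pair h2ab, Set.ncard_pair h3ab, Set.ncard_pair h2cd, Set.ncard_pair h3cd]
end
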